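/- Let G be a finite connected simple graph and let x, y be vertices of G. Then x ~ y (no single edge deletion separates x from y) if and only if there exist two edge-disjoint paths in G from x to y. -/

import Mathlib

/-!
Induct along a path from `u` to `v` whose first edge is `uz`. By induction there are two
edge-disjoint paths `P₁`, `P₂` from `z` to `v`, and since `uz` is not a bridge there is a walk
`Q` from `u` to `v` avoiding `uz`. Follow `Q` until it first meets `P₁ ∪ P₂`, say at `w` on `P₁`,
and continue along `P₁`; this walk is edge-disjoint from `uz` followed by `P₂`.
-/

namespace SimpleGraph

variable {V : Type*} {G : SimpleGraph V} {u v w z : V}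

lemma isEdgeReachable_two_iff_forall_mem_edgeSet (h : G.Reachable u v) :
    G.IsEdgeReachable 2 u v ↔ ∀ e ∈ G.edgeSet, (G.deleteEdges {e}).Reachable u v := by
  rw [isEdgeReachable_two]
  refine ⟨fun h' e _ ↦ h' e, fun h' e ↦ ?_⟩
  by_cases he : e ∈ G.edgeSet
  · exact h' e he
  · rwa [deleteEdges_eq_self.mpr (Set.disjoint_singleton_right.mpr he)]

lemma isEdgeReachable_two_of_edges_disjoint (p q : G.Walk u v) (hpq : p.edges.Disjoint q.edges) :
    G.IsEdgeReachable 2 u v := by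
  refine isEdgeReachable_two.mpr fun e ↦ ?_
  by_cases hp : e ∈ p.edges
  · exact (q.toDeleteEdge e (hpq hp)).reachable
  · exact (p.toDeleteEdge e hp).reachable

namespace Walk

lemma exists_isPath_edges_disjoint {p q : G.Walk u v} (hpq : p.edges.Disjoint q.edges) :
    ∃ p' q' : G.Walk u v, p'.IsPath ∧ q'.IsPath ∧ p'.edges.Disjoint q'.edges := by
  classical
  exact ⟨p.bypass, q.bypass, p.bypass_isPath, q.bypass_isPath,
    List.disjoint_of_subset_left (edges_bypass_subset_edges p)
      (List.disjoint_of_subset_right (edges_bypass_subset_edges q) hpq)⟩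

lemma IsPath.eq_of_start_mem_support_dropUntil [DecidableEq V] {p : G.Walk u v}
    (hp : p.IsPath) (hw : w ∈ p.support) (hu : u ∈ (p.dropUntil w hw).support) : u = w := by
  by_contra huw
  have hu' : u ∈ (p.dropUntil w hw).support.tail := by
    rw [← cons_tail_support, List.mem_cons] at hu
    exact hu.resolve_left huw
  have hnodup := hp.support_nodup
  rw [← p.take_spec hw, support_append, List.nodup_append] at hnodup
  exact hnodup.2.2 u (start_mem_support _) u hu' rfl

lemma edges_disjoint_append_dropUntil_cons [DecidableEq V] {P₁ P₂ : G.Walk z v}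
    (hP₁ : P₁.IsPath) (hP : P₁.edges.Disjoint P₂.edges) (huz : G.Adj u z)
    (R : G.Walk u w) (hR : s(u, z) ∉ R.edges) (hw : w ∈ P₁.support)
    (hRP : ∀ t ∈ R.support, t ∈ P₁.support ∨ t ∈ P₂.support → t = w) :
    (R.append (P₁.dropUntil w hw)).edges.Disjoint (cons huz P₂).edges := by
  rw [edges_cons, List.disjoint_cons_right, edges_append, List.disjoint_append_left,
    List.mem_append, not_or]
  refine ⟨⟨hR, fun he ↦ ?_⟩, fun e heR heP ↦ ?_, ?_⟩
  · have huw : u = w := hRP u R.start_mem_support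
      (.inl (P₁.support_dropUntil_subset_support hw (fst_mem_support_of_mem_edges _ he)))
    subst huw
    exact huz.ne (hP₁.eq_of_start_mem_support_dropUntil hw
      (snd_mem_support_of_mem_edges _ he)).symm
  · induction e using Sym2.ind with
    | _ a b =>
      have ha := hRP a (R.fst_mem_support_of_mem_edges heR)
        (.inr (P₂.fst_mem_support_of_mem_edges heP))
      have hb := hRP b (R.snd_mem_support_of_mem_edges heR)
        (.inr (P₂.snd_mem_support_of_mem_edges heP))
      exact (R.adj_of_mem_edges heR).ne (ha.trans hb.symm)
  · exact List.disjoint_of_subset_left (P₁.edges_dropUntil_subset_edges hw) hP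

end Walk

open Walk in
lemma exists_edges_disjoint_walks_of_adj {P₁ P₂ : G.Walk z v} (hP₁ : P₁.IsPath) (hP₂ : P₂.IsPath)
    (hP : P₁.edges.Disjoint P₂.edges) (huz : G.Adj u z)
    (hr : (G.deleteEdges {s(u, z)}).Reachable u v) :
    ∃ W₁ W₂ : G.Walk u v, W₁.edges.Disjoint W₂.edges := by
  classical
  obtain ⟨Q, hQ⟩ := reachable_deleteEdges_iff_exists_walk.mp hr
  obtain ⟨w, hwS, hwQ, hfirst⟩ := Q.exists_mem_support_forall_mem_support_imp_eq
    (P₁.support.toFinset ∪ P₂.support.toFinset) ⟨v, by simp⟩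
  set R := Q.takeUntil w hwQ
  have hR : s(u, z) ∉ R.edges := fun h ↦ hQ (Q.edges_takeUntil_subset_edges hwQ h)
  have hRP : ∀ t ∈ R.support, t ∈ P₁.support ∨ t ∈ P₂.support → t = w := fun t ht htP ↦
    hfirst t (by simpa using htP) ht
  rcases Finset.mem_union.mp hwS with hw | hw
  · exact ⟨_, _, edges_disjoint_append_dropUntil_cons hP₁ hP huz R hR (by simpa using hw) hRP⟩
  · exact ⟨_, _, edges_disjoint_append_dropUntil_cons hP₂ hP.symm huz R hR (by simpa using hw)
      fun t ht htP ↦ hRP t ht htP.symm⟩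

lemma IsEdgeReachable.exists_edges_disjoint_walks (h : G.IsEdgeReachable 2 u v) :
    ∃ p q : G.Walk u v, p.edges.Disjoint q.edges := by
  obtain ⟨p, hp⟩ := (h.reachable two_ne_zero).exists_isPath
  induction p with
  | nil => exact ⟨.nil, .nil, by simp⟩
  | @cons u z v huz q ih =>
    have hzv : G.IsEdgeReachable 2 z v :=
      hp.isTrail.isEdgeReachable_two_of_isEdgeReachable_two h (by simp) (by simp)
    obtain ⟨W₁, W₂, hW⟩ := ih hzv ((Walk.cons_isPath_iff huz q).mp hp).1
    obtain ⟨P₁, P₂, hP₁, hP₂, hP⟩ := Walk.exists_isPath_edges_disjoint hW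
    exact exists_edges_disjoint_walks_of_adj hP₁ hP₂ hP huz (isEdgeReachable_two.mp h _)

lemma isEdgeReachable_two_iff_exists_isPath_edges_disjoint :
    G.IsEdgeReachable 2 u v ↔
      ∃ p q : G.Walk u v, p.IsPath ∧ q.IsPath ∧ p.edges.Disjoint q.edges := by
  refine ⟨fun h ↦ ?_, fun ⟨p, q, _, _, hpq⟩ ↦ isEdgeReachable_two_of_edges_disjoint p q hpq⟩
  obtain ⟨p, q, hpq⟩ := h.exists_edges_disjoint_walks
  exact Walk.exists_isPath_edges_disjoint hpq

end SimpleGraph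

theorem same_component_iff_two_edge_disjoint_paths_general {V : Type*}
    (G : SimpleGraph V) (hG : G.Connected) (x y : V) :
    (∀ e ∈ G.edgeSet, (G.deleteEdges {e}).Reachable x y) ↔
    ∃ (p q : G.Walk x y), p.IsPath ∧ q.IsPath ∧
      ∀ e : Sym2 V, e ∈ p.edges → e ∉ q.edges := by
  rw [← SimpleGraph.isEdgeReachable_two_iff_forall_mem_edgeSet (hG.preconnected x y),
    SimpleGraph.isEdgeReachable_two_iff_exists_isPath_edges_disjoint]
  rfl

/-- In a finite connected simple graph `G`, vertices `x` and `y`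
satisfy `x ~ y` (no single edge deletion separates them) iff there are two
edge-disjoint paths in `G` from `x` to `y`. -/
theorem same_component_iff_two_edge_disjoint_paths {V : Type*} [Fintype V]
    (G : SimpleGraph V) (hG : G.Connected) (x y : V) :
    (∀ e ∈ G.edgeSet, (G.deleteEdges {e}).Reachable x y) ↔
    ∃ (p q : G.Walk x y), p.IsPath ∧ q.IsPath ∧
      ∀ e : Sym2 V, e ∈ p.edges → e ∉ q.edges :=
  same_component_iff_two_edge_disjoint_paths_general G hG x y
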